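/- Let n ≥ 1 be a natural number and z ∈ ℂ with |z| < 1. Then ∫₀¹ z·(1 − (zt)^n)^{−(n+2)/n}·(1 + (zt)^n)^{−1} dt = ∑_{k=0}^∞ ∑_{l=0}^∞ ((1/n)_{k+l} (1+2/n)_k (1)_l)/((1+1/n)_{k+l} · k! · l!) · (−1)^l · z^{n(k+l)+1}, where (1 − (zt)^n)^{−(n+2)/n} is the principal-branch complex power. In other words, the analytic part of the harmonic shear of the polygonal mapping φ(z) = ∫₀^z (1−ζ^n)^{−2/n} dζ with dilatation ω(z) = z^{2n} is h(z) = z·F₁(1/n, 1+2/n, 1; 1+1/n; z^n, −z^n). -/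

import Mathlib

/-!
Put `w = (zt)^n` and `c = 1 + 2/n`. By the binomial series `(1 - w)^(-c) = ∑ₖ (c)ₖ/k! wᵏ` and the
geometric series `(1 + w)⁻¹ = ∑ₗ (-w)ˡ`, the integrand is a double series of monomials
`t^(n(k+l))` whose terms are dominated on `[0, 1]` by their absolute values at `t = 1`, which are
summable. Integrating termwise produces the
factors `1/(n(k+l)+1) = (1/n)_(k+l) / (1+1/n)_(k+l)`, while `(1)ₗ = l!`.
-/

open Polynomial MeasureTheory
open scoped Nat Interval

theorem Ring.choose_add_sub_one_eq_ascPochhammer_div_factorial {K : Type*} [Field K] [CharZero K]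
    (c : K) (k : ℕ) : Ring.choose (c + k - 1) k = (ascPochhammer K k).eval c / k ! := by
  rw [← Ring.multichoose_eq, eq_div_iff (Nat.cast_ne_zero.mpr k.factorial_ne_zero), mul_comm,
    ← nsmul_eq_mul, Ring.factorial_nsmul_multichoose_eq_ascPochhammer, ascPochhammer_smeval_cast,
    ascPochhammer_smeval_eq_eval]

theorem ascPochhammer_eval_mul_add_natCast {K : Type*} [CommSemiring K] (a : K) (m : ℕ) :
    (ascPochhammer K m).eval a * (a + m) = a * (ascPochhammer K m).eval (a + 1) := by
  rw [← ascPochhammer_succ_eval, ascPochhammer_succ_left]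
  simp [eval_comp]

theorem ascPochhammer_eval_ne_zero_of_re_pos {a : ℂ} (ha : 0 < a.re) (m : ℕ) :
    (ascPochhammer ℂ m).eval a ≠ 0 := by
  rw [Ne, ascPochhammer_eval_eq_zero_iff]
  rintro ⟨k, -, hk⟩
  have := congrArg Complex.re hk
  simp only [Complex.natCast_re, Complex.neg_re] at this
  linarith [k.cast_nonneg (α := ℝ)]

theorem ascPochhammer_eval_one_add_inv_natCast {n : ℕ} (hn : n ≠ 0) (m : ℕ) :
    (ascPochhammer ℂ m).eval (1 + 1 / (n : ℂ)) =
      (ascPochhammer ℂ m).eval (1 / (n : ℂ)) * (n * m + 1) := by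
  have hn' : (n : ℂ) ≠ 0 := Nat.cast_ne_zero.mpr hn
  have h := ascPochhammer_eval_mul_add_natCast (1 / (n : ℂ)) m
  rw [add_comm (1 : ℂ)]
  field_simp at h ⊢
  linear_combination -h

namespace Complex

theorem hasFPowerSeriesOnBall_one_sub_cpow_neg (c : ℂ) :
    HasFPowerSeriesOnBall (fun w ↦ (1 - w) ^ (-c))
      (.ofScalars ℂ fun k ↦ (ascPochhammer ℂ k).eval c / k !) 0 1 := by
  simpa only [Ring.choose_add_sub_one_eq_ascPochhammer_div_factorial, one_div, cpow_neg]
    using one_div_one_sub_cpow_hasFPowerSeriesOnBall_zero c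

variable (c : ℂ) {w : ℂ}

theorem hasSum_ascPochhammer_div_factorial_mul_pow (hw : ‖w‖ < 1) :
    HasSum (fun k ↦ (ascPochhammer ℂ k).eval c / k ! * w ^ k) ((1 - w) ^ (-c)) := by
  simpa [FormalMultilinearSeries.ofScalars_apply_eq, mul_comm] using
    (hasFPowerSeriesOnBall_one_sub_cpow_neg c).hasSum (y := w) (by simpa [← ofReal_norm] using hw)

theorem summable_norm_ascPochhammer_div_factorial_mul_pow (hw : ‖w‖ < 1) :
    Summable fun k ↦ ‖(ascPochhammer ℂ k).eval c / k ! * w ^ k‖ := by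
  have hf := hasFPowerSeriesOnBall_one_sub_cpow_neg c
  simpa [FormalMultilinearSeries.ofScalars_apply_eq, mul_comm] using
    FormalMultilinearSeries.summable_norm_apply _ (x := w)
      (Metric.eball_subset_eball hf.r_le (by simpa [← ofReal_norm] using hw))

theorem hasSum_one_sub_cpow_neg_mul_one_add_inv (hw : ‖w‖ < 1) :
    HasSum (fun p : ℕ × ℕ ↦ (ascPochhammer ℂ p.1).eval c / p.1 ! * w ^ p.1 * (-w) ^ p.2)
      ((1 - w) ^ (-c) * (1 + w)⁻¹) := by
  have hw' : ‖-w‖ < 1 := by rwa [norm_neg]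
  have hgeom : HasSum (fun l : ℕ ↦ (-w) ^ l) (1 + w)⁻¹ := by
    simpa only [sub_neg_eq_add] using hasSum_geometric_of_norm_lt_one hw'
  have hprod := summable_mul_of_summable_norm
    (summable_norm_ascPochhammer_div_factorial_mul_pow c hw)
    (summable_norm_geometric_of_norm_lt_one hw')
  exact (hasSum_ascPochhammer_div_factorial_mul_pow c hw).mul hgeom hprod

theorem summable_norm_ascPochhammer_div_factorial_mul_pow_mul_neg_pow (hw : ‖w‖ < 1) :
    Summable fun p : ℕ × ℕ ↦ ‖(ascPochhammer ℂ p.1).eval c / p.1 ! * w ^ p.1 * (-w) ^ p.2‖ :=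
  (summable_norm_ascPochhammer_div_factorial_mul_pow c hw).mul_norm
    (summable_norm_geometric_of_norm_lt_one (by rwa [norm_neg]))

end Complex

theorem hasSum_integral_of_hasSum_mul_pow {ι : Type*} [Countable ι] {C : ι → ℂ} {m : ι → ℕ}
    {f : ℝ → ℂ} (hC : Summable fun i ↦ ‖C i‖)
    (hf : ∀ t ∈ Set.Icc (0 : ℝ) 1, HasSum (fun i ↦ C i * (t : ℂ) ^ m i) (f t)) :
    HasSum (fun i ↦ C i / (m i + 1)) (∫ t in (0 : ℝ)..1, f t) := by
  have hIcc : ∀ t ∈ Ι (0 : ℝ) 1, t ∈ Set.Icc (0 : ℝ) 1 := fun t ht ↦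
    Set.Ioc_subset_Icc_self (by rwa [Set.uIoc_of_le zero_le_one] at ht)
  have hbound : ∀ i, ∀ t ∈ Ι (0 : ℝ) 1, ‖C i * (t : ℂ) ^ m i‖ ≤ ‖C i‖ := fun i t ht ↦ by
    obtain ⟨ht0, ht1⟩ := hIcc t ht
    rw [norm_mul, norm_pow, Complex.norm_real, Real.norm_of_nonneg ht0]
    exact mul_le_of_le_one_right (norm_nonneg _) (pow_le_one₀ ht0 ht1)
  have hmonomial : ∀ i, ∫ t in (0 : ℝ)..1, C i * (t : ℂ) ^ m i = C i / (m i + 1) := fun i ↦ by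
    rw [intervalIntegral.integral_const_mul]
    norm_cast
    rw [intervalIntegral.integral_ofReal, integral_pow]
    push_cast
    ring
  simpa only [hmonomial] using
    intervalIntegral.hasSum_integral_of_dominated_convergence (μ := volume)
      (F := fun i (t : ℝ) ↦ C i * (t : ℂ) ^ m i) (fun i _ ↦ ‖C i‖)
      (fun i ↦ (by fun_prop : Continuous fun t : ℝ ↦ C i * (t : ℂ) ^ m i).aestronglyMeasurable)
      (fun i ↦ .of_forall (hbound i)) (.of_forall fun _ _ ↦ hC) intervalIntegrable_const
      (.of_forall fun t ht ↦ hf t (hIcc t ht))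

theorem hasSum_mul_one_sub_pow_cpow_neg_mul_one_add_pow_inv (n : ℕ) (c z s : ℂ)
    (h : ‖(z * s) ^ n‖ < 1) :
    HasSum (fun p : ℕ × ℕ ↦
        z * ((ascPochhammer ℂ p.1).eval c / p.1 ! * (z ^ n) ^ p.1 * (-z ^ n) ^ p.2) *
          s ^ (n * (p.1 + p.2)))
      (z * (1 - (z * s) ^ n) ^ (-c) * (1 + (z * s) ^ n)⁻¹) := by
  have := (Complex.hasSum_one_sub_cpow_neg_mul_one_add_inv c h).mul_left z
  rw [← mul_assoc] at this
  exact this.congr_fun fun p ↦ by ring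

theorem appellF1_coeff_eq {n : ℕ} (hn : n ≠ 0) (c z : ℂ) (k l : ℕ) :
    (ascPochhammer ℂ (k + l)).eval (1 / (n : ℂ)) * (ascPochhammer ℂ k).eval c *
          (ascPochhammer ℂ l).eval 1 /
        ((ascPochhammer ℂ (k + l)).eval (1 + 1 / (n : ℂ)) * k ! * l !) *
        (-1) ^ l * z ^ (n * (k + l) + 1) =
      z * ((ascPochhammer ℂ k).eval c / k ! * (z ^ n) ^ k * (-z ^ n) ^ l) /
        (((n * (k + l) : ℕ) : ℂ) + 1) := by
  have hpoch := ascPochhammer_eval_ne_zero_of_re_pos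
    (a := 1 / (n : ℂ)) (by simp; positivity) (k + l)
  have hden : (n : ℂ) * ((k + l : ℕ) : ℂ) + 1 ≠ 0 := by
    exact_mod_cast (n * (k + l)).succ_ne_zero
  have hl : (l ! : ℂ) ≠ 0 := Nat.cast_ne_zero.mpr l.factorial_ne_zero
  rw [ascPochhammer_eval_one, ascPochhammer_eval_one_add_inv_natCast hn, Nat.cast_mul]
  field_simp
  ring

/-- The analytic part of the harmonic shear of the regular `n`-gon mapping
`φ(z) = ∫₀^z (1-ζ^n)^(-2/n) dζ` with dilatation `ω(z) = z^(2n)` is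
`h(z) = z·F₁(1/n, 1+2/n, 1; 1+1/n; z^n, -z^n)`. -/
theorem polygon_shear_analytic_part_z2n
    (n : ℕ) (hn : 1 ≤ n) (z : ℂ) (hz : ‖z‖ < 1) :
    (∫ t in (0:ℝ)..1,
        z * ((1 : ℂ) - (z * (t : ℂ)) ^ n) ^ (-(((n : ℂ) + 2) / (n : ℂ))) *
          ((1 : ℂ) + (z * (t : ℂ)) ^ n)⁻¹) =
      ∑' k : ℕ, ∑' l : ℕ,
        (Polynomial.eval (1 / (n : ℂ)) (ascPochhammer ℂ (k + l)) *
            Polynomial.eval (1 + 2 / (n : ℂ)) (ascPochhammer ℂ k) *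
            Polynomial.eval (1 : ℂ) (ascPochhammer ℂ l)) /
          (Polynomial.eval (1 + 1 / (n : ℂ)) (ascPochhammer ℂ (k + l)) *
            (Nat.factorial k : ℂ) * (Nat.factorial l : ℂ)) *
          (-1 : ℂ) ^ l * z ^ (n * (k + l) + 1) := by
  have hn0 : n ≠ 0 := by omega
  have hc : ((n : ℂ) + 2) / n = 1 + 2 / n := by field_simp
  have hzn : ‖z ^ n‖ < 1 := by rw [norm_pow]; exact pow_lt_one₀ (norm_nonneg z) hz hn0
  have hseries := hasSum_integral_of_hasSum_mul_pow (m := fun p : ℕ × ℕ ↦ n * (p.1 + p.2))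
    (C := fun p ↦ z * ((ascPochhammer ℂ p.1).eval (1 + 2 / (n : ℂ)) / p.1 ! *
      (z ^ n) ^ p.1 * (-z ^ n) ^ p.2))
    (((Complex.summable_norm_ascPochhammer_div_factorial_mul_pow_mul_neg_pow _ hzn).mul_left
      ‖z‖).congr fun p ↦ (norm_mul _ _).symm)
    fun t ⟨ht0, ht1⟩ ↦ hasSum_mul_one_sub_pow_cpow_neg_mul_one_add_pow_inv n _ z t <| by
      rw [norm_pow, norm_mul, Complex.norm_real, Real.norm_of_nonneg ht0]
      exact pow_lt_one₀ (by positivity) (by nlinarith [norm_nonneg z]) hn0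
  rw [hc, ← hseries.tsum_eq, hseries.summable.tsum_prod]
  exact tsum_congr fun k ↦ tsum_congr fun l ↦ (appellF1_coeff_eq hn0 _ z k l).symm
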